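/- arXiv:1504.04798 — 5 statements merged into one kernel-verified Lean document; each statement's English description precedes it below -/
import Mathlib

section
/- Let U be a type and let α, β, γ, δ : U → Prop be unary predicates on U. Then (∃ ρ : U → Prop, (∀ x, α x ∨ ρ x) ∧ (∀ x, β x ∨ ¬ ρ x) ∧ (∃ u, γ u ∧ ρ u) ∧ (∃ v, δ v ∧ ¬ ρ v)) ↔ ((∀ x, α x ∨ β x) ∧ ∃ u v, u ≠ v ∧ γ u ∧ β u ∧ δ v ∧ α v). (The simplest instance of Behmann's 'rough resultant' for the main elimination form, including the distinctness clause u ≠ v.) -/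
/-! Resolving the two universal clauses on `ρ` yields `∀ x, α x ∨ β x`, and the witnesses `u`, `v`
are distinct because `ρ` separates them. Conversely, `ρ x := x ≠ v ∧ β x` is a solution: `α v`
covers the one point it excludes. -/

theorem forall_or_of_forall_or_of_forall_or_not {U : Type*} {α β ρ : U → Prop}
    (hα : ∀ x, α x ∨ ρ x) (hβ : ∀ x, β x ∨ ¬ρ x) (x : U) : α x ∨ β x :=
  (hα x).imp_right fun hρ => (hβ x).resolve_right (not_not_intro hρ)

theorem behmann_rough_resultant_simple (U : Type*) (α β γ δ : U → Prop) :
    (∃ ρ : U → Prop, (∀ x, α x ∨ ρ x) ∧ (∀ x, β x ∨ ¬ ρ x) ∧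
        (∃ u, γ u ∧ ρ u) ∧ (∃ v, δ v ∧ ¬ ρ v)) ↔
      ((∀ x, α x ∨ β x) ∧ ∃ u v, u ≠ v ∧ γ u ∧ β u ∧ δ v ∧ α v) := by
  constructor
  · rintro ⟨ρ, hαρ, hβρ, ⟨u, hγu, hρu⟩, ⟨v, hδv, hρv⟩⟩
    exact ⟨forall_or_of_forall_or_of_forall_or_not hαρ hβρ, u, v, fun huv => hρv (huv ▸ hρu),
      hγu, (hβρ u).resolve_right (not_not_intro hρu), hδv, (hαρ v).resolve_right hρv⟩
  · rintro ⟨hαβ, u, v, huv, hγu, hβu, hδv, hαv⟩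
    refine ⟨fun x => x ≠ v ∧ β x, fun x => ?_,
      fun x => (em (β x)).imp_right fun hβx hρx => hβx hρx.2,
      ⟨u, hγu, huv, hβu⟩, ⟨v, hδv, fun hρv => hρv.1 rfl⟩⟩
    by_cases hxv : x = v
    · exact Or.inl (hxv ▸ hαv)
    · exact (hαβ x).imp_right (⟨hxv, ·⟩)
end

section
/- Let U be a type, let α, β : U → Prop be unary predicates on U, let I and J be index types, and let γ : I → U → Prop and δ : J → U → Prop be families of unary predicates. Then (∃ ρ : U → Prop, (∀ x, α x ∨ ρ x) ∧ (∀ x, β x ∨ ¬ ρ x) ∧ (∀ i, ∃ u, γ i u ∧ ρ u) ∧ (∀ j, ∃ v, δ j v ∧ ¬ ρ v)) ↔ ((∀ x, α x ∨ β x) ∧ ∃ (u : I → U) (v : J → U), (∀ i j, u i ≠ v j) ∧ (∀ i, γ i (u i) ∧ β (u i)) ∧ (∀ j, δ j (v j) ∧ α (v j))). (Behmann's general 'rough resultant' for the main elimination form: the quantifier ∃ρ is eliminated from a conjunction of formulas ∀x(αx ∨ ρx), ∀x(βx ∨ ¬ρx), ∃u(γᵢu ∧ ρu), ∃v(δⱼv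 ∧ ¬ρv), and in the resultant the witnesses uᵢ can be chosen each distinct from each vⱼ.) -/
/-!
Once witnesses `u i` and `v j` are fixed, the conditions on `ρ` say exactly that `ρ` lies between
the lower bound `{x | ¬ α x} ∪ range u` and the upper bound `{x | β x} \ range v`. Such a `ρ` exists
iff the lower bound is contained in the upper one, which unfolds to `∀ x, α x ∨ β x`,
`β (u i)`, `α (v j)` and `u i ≠ v j`. Choosing the witnesses of the existentials as functions of
`i` and `j` reduces the theorem to this fixed-witness case.
-/

open Set

theorem exists_pred_between_iff {U : Type*} (α β : U → Prop) (P N : Set U) :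
    (∃ ρ : U → Prop, (∀ x, α x ∨ ρ x) ∧ (∀ x, β x ∨ ¬ ρ x) ∧
        (∀ x ∈ P, ρ x) ∧ (∀ x ∈ N, ¬ ρ x)) ↔
      (∀ x, α x ∨ β x) ∧ (∀ x ∈ P, β x) ∧ (∀ x ∈ N, α x) ∧ Disjoint P N := by
  constructor
  · rintro ⟨ρ, hαρ, hβρ, hP, hN⟩
    refine ⟨fun x => ?_, fun x hx => (hβρ x).resolve_right (not_not_intro (hP x hx)),
      fun x hx => (hαρ x).resolve_right (hN x hx),
      disjoint_left.2 fun x hxP hxN => hN x hxN (hP x hxP)⟩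
    by_cases hρ : ρ x
    · exact .inr ((hβρ x).resolve_right (not_not_intro hρ))
    · exact .inl ((hαρ x).resolve_right hρ)
  · rintro ⟨hαβ, hPβ, hNα, hPN⟩
    refine ⟨fun x => ¬ α x ∨ x ∈ P, fun x => or_iff_not_imp_left.2 .inl, fun x => ?_,
      fun x hx => .inr hx, fun x hx => ?_⟩
    · by_cases hβ : β x
      · exact .inl hβ
      · refine .inr ?_
        rintro (hα | hxP)
        · exact hα ((hαβ x).resolve_right hβ)
        · exact hβ (hPβ x hxP)
    · rintro (hα | hxP)
      · exact hα (hNα x hx)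
      · exact disjoint_left.1 hPN hxP hx

theorem behmann_rough_resultant_general (U : Type*) (α β : U → Prop)
    (I J : Type*) (γ : I → U → Prop) (δ : J → U → Prop) :
    (∃ ρ : U → Prop, (∀ x, α x ∨ ρ x) ∧ (∀ x, β x ∨ ¬ ρ x) ∧
        (∀ i, ∃ u, γ i u ∧ ρ u) ∧ (∀ j, ∃ v, δ j v ∧ ¬ ρ v)) ↔
      ((∀ x, α x ∨ β x) ∧ ∃ (u : I → U) (v : J → U),
        (∀ i j, u i ≠ v j) ∧ (∀ i, γ i (u i) ∧ β (u i)) ∧ (∀ j, δ j (v j) ∧ α (v j))) := by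
  constructor
  · rintro ⟨ρ, hαρ, hβρ, hu, hv⟩
    choose u hγ hρu using hu
    choose v hδ hρv using hv
    obtain ⟨hαβ, hβu, hαv, huv⟩ := (exists_pred_between_iff α β (range u) (range v)).1
      ⟨ρ, hαρ, hβρ, forall_mem_range.2 hρu, forall_mem_range.2 hρv⟩
    exact ⟨hαβ, u, v, disjoint_range_iff.1 huv, fun i => ⟨hγ i, forall_mem_range.1 hβu i⟩,
      fun j => ⟨hδ j, forall_mem_range.1 hαv j⟩⟩
  · rintro ⟨hαβ, u, v, huv, hu, hv⟩
    obtain ⟨ρ, hαρ, hβρ, hρu, hρv⟩ := (exists_pred_between_iff α β (range u) (range v)).2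
      ⟨hαβ, forall_mem_range.2 fun i => (hu i).2, forall_mem_range.2 fun j => (hv j).2,
        disjoint_range_iff.2 huv⟩
    exact ⟨ρ, hαρ, hβρ, fun i => ⟨u i, (hu i).1, forall_mem_range.1 hρu i⟩,
      fun j => ⟨v j, (hv j).1, forall_mem_range.1 hρv j⟩⟩
end

section
/- Let k be a natural number and let L be a first-order language whose symbols consist of exactly k unary relation symbols (no function symbols, no constant symbols, no relation symbols of other arities). Let M and N be L-structures such that for every subset S of the k relation symbols, the set of elements of M whose 'type' is exactly S (i.e., the elements m such that, for each relation symbol R, R holds of m if and only if R ∈ S) and the corresponding set of elements of N either have the same cardinality or are both infinite. Then M and N are elementarily equivalent, i.e., they satisfy exactly the same L-sentences (in first-order logic with equality). -/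
open FirstOrder Language

/-- The first-order language whose symbols are exactly `k` unary relation symbols. -/
def monadicLang (k : ℕ) : FirstOrder.Language where
  Functions := fun _ => Empty
  Relations := fun n => match n with
    | 1 => Fin k
    | _ => Empty

/-- The set of elements of `M` whose type is exactly `S`: those `m` such that, for each
relation symbol `R`, `R` holds of `m` iff `R ∈ S`. -/
def typeClass {k : ℕ} (M : Type*) [(monadicLang k).Structure M] (S : Set (Fin k)) : Set M :=
  {m : M | ∀ R : Fin k,
    Structure.RelMap (L := monadicLang k) (M := M) (n := 1) R ![m] ↔ R ∈ S}


/-!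
Back and forth. Call tuples `v` in `M` and `w` in `N` a partial isomorphism when they have the
same equality pattern and each `v i` has the same type as `w i`. In a monadic language every term
is a variable, so partial isomorphisms preserve atomic formulas. The cardinality hypothesis says
exactly that each type class has the same `encard` in `M` and in `N`, and this lets every partial
isomorphism be extended by any new element on either side: a new element of type `S` in `M` leaves
fewer elements of type `S` inside `v` than in all of `M`, hence also fewer inside `w` than in all
of `N`. Induction on formulas then shows that partial isomorphisms preserve every formula; the
empty one gives the theorem.
-/

open Set

theorem Set.encard_eq_of_equiv_or_infinite {α β : Type*} {s : Set α} {t : Set β}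
    (h : Nonempty (s ≃ t) ∨ (Infinite s ∧ Infinite t)) : s.encard = t.encard := by
  rcases h with e | ⟨hs, ht⟩
  · exact encard_congr e.some
  · rw [(infinite_coe_iff.mp hs).encard_eq, (infinite_coe_iff.mp ht).encard_eq]

theorem Set.encard_image_eq_of_eq_iff {ι α β : Type*} {v : ι → α} {w : ι → β}
    (h : ∀ i j, v i = v j ↔ w i = w j) (I : Set ι) : (v '' I).encard = (w '' I).encard := by
  set pair : ι → α × β := fun i => (v i, w i)
  have hfst : InjOn Prod.fst (pair '' I) := by
    rintro _ ⟨i, -, rfl⟩ _ ⟨j, -, rfl⟩ hij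
    exact Prod.ext hij ((h i j).mp hij)
  have hsnd : InjOn Prod.snd (pair '' I) := by
    rintro _ ⟨i, -, rfl⟩ _ ⟨j, -, rfl⟩ hij
    exact Prod.ext ((h i j).mpr hij) hij
  calc (v '' I).encard = (Prod.fst '' (pair '' I)).encard := by rw [image_image]
    _ = (Prod.snd '' (pair '' I)).encard := by rw [hfst.encard_image, hsnd.encard_image]
    _ = (w '' I).encard := by rw [image_image]

namespace monadicLang

variable {k : ℕ} {M N : Type*} [(monadicLang k).Structure M] [(monadicLang k).Structure N]

theorem term_eq_var {α : Type*} (t : (monadicLang k).Term α) : ∃ a, t = Term.var a := by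
  cases t with
  | var a => exact ⟨a, rfl⟩
  | func f _ => exact f.elim

theorem realize_unary_args {α P : Type*} [(monadicLang k).Structure P]
    {ts : Fin 1 → (monadicLang k).Term α} {a : α} (h : ts 0 = Term.var a) (v : α → P) :
    (fun j => (ts j).realize v) = ![v a] := by
  ext j
  rw [Subsingleton.elim j 0, h]
  rfl

variable (k) in
def typeOf (m : M) : Set (Fin k) :=
  {R | Structure.RelMap (L := monadicLang k) (n := 1) R ![m]}

theorem mem_typeClass_iff {m : M} {S : Set (Fin k)} : m ∈ typeClass M S ↔ typeOf k m = S := by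
  simp only [typeClass, typeOf, Set.ext_iff, mem_ofPred_eq]

variable (k) in
def IsPartialIso {ι : Type*} (v : ι → M) (w : ι → N) : Prop :=
  (∀ i j, v i = v j ↔ w i = w j) ∧ ∀ i, typeOf k (v i) = typeOf k (w i)

namespace IsPartialIso

theorem symm {ι : Type*} {v : ι → M} {w : ι → N} (hp : IsPartialIso k v w) :
    IsPartialIso k w v :=
  ⟨fun i j => (hp.1 i j).symm, fun i => (hp.2 i).symm⟩

theorem exists_fresh {ι : Type*} [Finite ι] {v : ι → M} {w : ι → N} (hp : IsPartialIso k v w)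
    {m : M} (hm : m ∉ range v)
    (hcard : (typeClass M (typeOf k m)).encard = (typeClass N (typeOf k m)).encard) :
    ∃ m', m' ∉ range w ∧ typeOf k m' = typeOf k m := by
  set S := typeOf k m
  by_contra! hfull
  set I := {i | typeOf k (v i) = S}
  have hvI : v '' I ⊂ typeClass M S := by
    refine (ssubset_iff_of_subset ?_).mpr ⟨m, mem_typeClass_iff.mpr rfl, ?_⟩
    · rintro _ ⟨i, hi, rfl⟩
      exact mem_typeClass_iff.mpr hi
    · rintro ⟨i, -, rfl⟩
      exact hm ⟨i, rfl⟩
  have hwI : typeClass N S ⊆ w '' I := by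
    intro x hx
    by_cases hxw : x ∈ range w
    · obtain ⟨i, rfl⟩ := hxw
      exact ⟨i, (hp.2 i).trans (mem_typeClass_iff.mp hx), rfl⟩
    · exact absurd (mem_typeClass_iff.mp hx) (hfull x hxw)
  have hlt := calc
    (typeClass N S).encard ≤ (w '' I).encard := encard_le_encard hwI
    _ = (v '' I).encard := (encard_image_eq_of_eq_iff hp.1 I).symm
    _ < (typeClass M S).encard := ((toFinite I).image v).encard_lt_encard hvI
  exact hlt.ne' hcard

theorem snoc {n : ℕ} {v : Fin n → M} {w : Fin n → N} (hp : IsPartialIso k v w)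
    {m : M} {m' : N} (heq : ∀ i, v i = m ↔ w i = m') (htype : typeOf k m = typeOf k m') :
    IsPartialIso k (Fin.snoc v m) (Fin.snoc w m') := by
  refine ⟨fun i j => ?_, fun i => ?_⟩
  · induction i using Fin.lastCases <;> induction j using Fin.lastCases <;>
      simp only [Fin.snoc_last, Fin.snoc_castSucc, eq_comm (a := m), eq_comm (a := m'), heq,
        hp.1]
  · induction i using Fin.lastCases <;> simp [*, hp.2]

theorem exists_snoc {n : ℕ} {v : Fin n → M} {w : Fin n → N}
    (hcard : ∀ S : Set (Fin k), (typeClass M S).encard = (typeClass N S).encard)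
    (hp : IsPartialIso k v w) (m : M) : ∃ m', IsPartialIso k (Fin.snoc v m) (Fin.snoc w m') := by
  by_cases hm : m ∈ range v
  · obtain ⟨i, rfl⟩ := hm
    exact ⟨w i, hp.snoc (fun j => hp.1 j i) (hp.2 i)⟩
  · obtain ⟨m', hm', htype⟩ := hp.exists_fresh hm (hcard _)
    exact ⟨m', hp.snoc (fun i => iff_of_false (fun h => hm ⟨i, h⟩) fun h => hm' ⟨i, h⟩)
      htype.symm⟩

end IsPartialIso

theorem realize_iff_of_isPartialIso
    (hcard : ∀ S : Set (Fin k), (typeClass M S).encard = (typeClass N S).encard) {n : ℕ}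
    (φ : (monadicLang k).BoundedFormula Empty n) (x : Empty → M) (y : Empty → N)
    {xs : Fin n → M} {ys : Fin n → N} (hp : IsPartialIso k xs ys) :
    φ.Realize x xs ↔ φ.Realize y ys := by
  induction φ with
  | falsum => rfl
  | equal t₁ t₂ =>
    obtain ⟨⟨⟨⟩⟩ | i, rfl⟩ := term_eq_var t₁
    obtain ⟨⟨⟨⟩⟩ | j, rfl⟩ := term_eq_var t₂
    exact hp.1 i j
  | @rel _ l R ts =>
    match l, R, ts with
    | 0, R, _ | _ + 2, R, _ => exact R.elim
    | 1, R, ts =>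
      obtain ⟨⟨⟨⟩⟩ | i, hi⟩ := term_eq_var (ts 0)
      simp only [BoundedFormula.Realize]
      rw [realize_unary_args hi, realize_unary_args hi]
      exact Set.ext_iff.mp (hp.2 i) R
  | imp φ ψ ihφ ihψ => exact imp_congr (ihφ hp) (ihψ hp)
  | all φ ih =>
    refine ⟨fun H b => ?_, fun H a => ?_⟩
    · obtain ⟨a, hab⟩ := hp.symm.exists_snoc (fun S => (hcard S).symm) b
      exact (ih hab.symm).mp (H a)
    · obtain ⟨b, hab⟩ := hp.exists_snoc hcard a
      exact (ih hab).mpr (H b)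

end monadicLang

theorem monadic_elementary_equivalence (k : ℕ) (M N : Type*)
    [(monadicLang k).Structure M] [(monadicLang k).Structure N]
    (h : ∀ S : Set (Fin k),
      Nonempty (typeClass M S ≃ typeClass N S) ∨
        (Infinite (typeClass M S) ∧ Infinite (typeClass N S)))
    (φ : (monadicLang k).Sentence) :
    M ⊨ φ ↔ N ⊨ φ :=
  monadicLang.realize_iff_of_isPartialIso (fun S => encard_eq_of_equiv_or_infinite (h S)) φ
    default default (xs := default) (ys := default) ⟨finZeroElim, finZeroElim⟩
end

section
/- Let L be a first-order language with finitely many relation symbols, all of them unary, and with no function or constant symbols. Then every L-sentence (of first-order logic with equality) that has a model has a finite model. (The finite model property for monadic first-order logic, underlying the decision procedure for the monadic case of the Entscheidungsproblem.) -/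
/-!
In a monadic language an element is described, up to atomic formulas, by its colour (the set of
unary predicates it satisfies), and a tuple by the colours of its entries together with their
equality pattern. Suppose two structures have, for every colour, the same number of elements of
that colour, counted only up to a threshold `n`. Then tuples with the same pattern satisfy the same
formulas as long as the length of the tuple plus the quantifier depth is at most `n`: this is a
back-and-forth argument, since a new witness of colour `c` only has to avoid the fewer than `n`
entries already in the tuple. Keeping at most `n` elements of each of the finitely many colours of a
model therefore gives a finite substructure that satisfies the same sentences of quantifier depth
less than `n`.
-/

open FirstOrder Language Structure Set

theorem Set.encard_image_eq_of_forall_eq_iff {ι α β : Type*} {f : ι → α} {g : ι → β}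
    (hfg : ∀ i j, f i = f j ↔ g i = g j) (s : Set ι) : (f '' s).encard = (g '' s).encard := by
  have hf : (Prod.fst '' ((fun i => (f i, g i)) '' s)) = f '' s := image_image ..
  have hg : (Prod.snd '' ((fun i => (f i, g i)) '' s)) = g '' s := image_image ..
  have hfst : InjOn Prod.fst ((fun i => (f i, g i)) '' s) := by
    rintro _ ⟨i, -, rfl⟩ _ ⟨j, -, rfl⟩ (hij : f i = f j)
    simp [hij, (hfg i j).1 hij]
  have hsnd : InjOn Prod.snd ((fun i => (f i, g i)) '' s) := by
    rintro _ ⟨i, -, rfl⟩ _ ⟨j, -, rfl⟩ (hij : g i = g j)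
    simp [hij, (hfg i j).2 hij]
  rw [← hf, ← hg, hfst.encard_image, hsnd.encard_image]

namespace FirstOrder.Language

variable {L : Language}

def BoundedFormula.quantifierDepth {α : Type*} : ∀ {n}, L.BoundedFormula α n → ℕ
  | _, .falsum => 0
  | _, .equal _ _ => 0
  | _, .rel _ _ => 0
  | _, .imp φ ψ => max φ.quantifierDepth ψ.quantifierDepth
  | _, .all φ => φ.quantifierDepth + 1

theorem Term.exists_eq_var [L.IsRelational] {α : Type*} : ∀ t : L.Term α, ∃ a, t = var a
  | var a => ⟨a, rfl⟩
  | func f _ => isEmptyElim f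

section Monadic

variable {M N : Type*} [L.Structure M] [L.Structure N] {n m : ℕ}

variable (L) in
def color (x : M) : L.Relations 1 → Prop := fun R => RelMap R fun _ => x

variable (L) in
def ColorCountEquiv (n : ℕ) (M N : Type*) [L.Structure M] [L.Structure N] : Prop :=
  ∀ c : L.Relations 1 → Prop,
    min {x : M | color L x = c}.encard n = min {y : N | color L y = c}.encard n

theorem ColorCountEquiv.symm (h : ColorCountEquiv L n M N) : ColorCountEquiv L n N M :=
  fun c => (h c).symm

theorem ColorCountEquiv.nonempty (h : ColorCountEquiv L n M N) (hn : 0 < n) [Nonempty M] :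
    Nonempty N := by
  obtain ⟨x⟩ := ‹Nonempty M›
  have hx : 0 < min {x' : M | color L x' = color L x}.encard n :=
    lt_min (encard_pos.2 ⟨x, rfl⟩) (by exact_mod_cast hn)
  obtain ⟨y, -⟩ := encard_pos.1 (lt_min_iff.1 (h (color L x) ▸ hx)).1
  exact ⟨y⟩

variable (L) in
def SameColorPattern {ι : Type*} (xs : ι → M) (ys : ι → N) : Prop :=
  (∀ i, color L (xs i) = color L (ys i)) ∧ ∀ i j, xs i = xs j ↔ ys i = ys j

theorem SameColorPattern.symm {ι : Type*} {xs : ι → M} {ys : ι → N}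
    (h : SameColorPattern L xs ys) : SameColorPattern L ys xs :=
  ⟨fun i => (h.1 i).symm, fun i j => (h.2 i j).symm⟩

theorem SameColorPattern.snoc {xs : Fin m → M} {ys : Fin m → N} (h : SameColorPattern L xs ys)
    {a : M} {b : N} (hab : color L a = color L b) (hxa : ∀ i, xs i = a ↔ ys i = b) :
    SameColorPattern L (Fin.snoc xs a) (Fin.snoc ys b) := by
  refine ⟨Fin.lastCases (by simpa using hab) (fun i => by simpa using h.1 i), fun i j => ?_⟩
  induction i using Fin.lastCases <;> induction j using Fin.lastCases <;>
    simp [h.2, hxa, eq_comm (a := a), eq_comm (a := b)]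

theorem SameColorPattern.exists_snoc (h : ColorCountEquiv L n M N) (hm : m < n)
    {xs : Fin m → M} {ys : Fin m → N} (hxy : SameColorPattern L xs ys) (b : N) :
    ∃ a : M, SameColorPattern L (Fin.snoc xs a) (Fin.snoc ys b) := by
  by_cases hb : ∃ i, ys i = b
  · obtain ⟨i, rfl⟩ := hb
    exact ⟨xs i, hxy.snoc (hxy.1 i) fun j => hxy.2 j i⟩
  rw [not_exists] at hb
  set c := color L b
  set I := {i | color L (ys i) = c}
  have hkm : (ys '' I).encard ≤ m :=
    (encard_image_le _ _).trans (encard_le_card.trans (by simp))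
  have hkN : (ys '' I).encard + 1 ≤ {y : N | color L y = c}.encard := by
    rw [← encard_insert_of_notMem (by rintro ⟨i, -, hi⟩; exact hb i hi)]
    refine encard_le_encard ?_
    rintro _ (rfl | ⟨i, hi, rfl⟩)
    exacts [rfl, hi]
  have hkn : (ys '' I).encard + 1 ≤ n :=
    calc (ys '' I).encard + 1 ≤ m + 1 := by gcongr
      _ ≤ n := by exact_mod_cast hm
  have hkM : (xs '' I).encard < {x : M | color L x = c}.encard := by
    have := (h c).symm ▸ le_min hkN hkn
    rw [encard_image_eq_of_forall_eq_iff hxy.2]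
    exact (ENat.add_one_le_iff (hkm.trans_lt (ENat.natCast_lt_top m)).ne).1
      (this.trans (min_le_left _ _))
  obtain ⟨a, ha, haI⟩ := not_subset.1 fun hsub => (encard_le_encard hsub).not_gt hkM
  refine ⟨a, hxy.snoc ha fun i => iff_of_false (fun hi => haI ⟨i, ?_, hi⟩) (hb i)⟩
  change color L (ys i) = c
  rw [← hxy.1 i, hi, ha]

theorem realize_iff_of_sameColorPattern [L.IsRelational]
    (hRel : ∀ k, k ≠ 1 → IsEmpty (L.Relations k)) (h : ColorCountEquiv L n M N)
    (ψ : L.BoundedFormula Empty m) (hψ : m + ψ.quantifierDepth ≤ n) (v : Empty → M)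
    (w : Empty → N) {xs : Fin m → M} {ys : Fin m → N} (hxy : SameColorPattern L xs ys) :
    ψ.Realize v xs ↔ ψ.Realize w ys := by
  induction ψ with
  | falsum => rfl
  | equal t₁ t₂ =>
    obtain ⟨_ | i, rfl⟩ := t₁.exists_eq_var
    · contradiction
    obtain ⟨_ | j, rfl⟩ := t₂.exists_eq_var
    · contradiction
    exact hxy.2 i j
  | @rel _ l R ts =>
    obtain rfl : l = 1 := by_contra fun hl => (hRel l hl).elim R
    obtain ⟨_ | i, hi⟩ := (ts 0).exists_eq_var
    · contradiction
    obtain rfl : ts = fun _ => var (Sum.inr i) := funext fun j => Subsingleton.elim j 0 ▸ hi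
    exact iff_of_eq (congrFun (hxy.1 i) R)
  | imp φ ψ ihφ ihψ =>
    simp only [BoundedFormula.quantifierDepth] at hψ
    exact imp_congr (ihφ (by omega) hxy) (ihψ (by omega) hxy)
  | all φ ih =>
    simp only [BoundedFormula.quantifierDepth] at hψ
    simp only [BoundedFormula.realize_all]
    refine ⟨fun hM b => ?_, fun hN a => ?_⟩
    · obtain ⟨a, hab⟩ := hxy.exists_snoc h (by omega) b
      exact (ih (by omega) hab).1 (hM a)
    · obtain ⟨b, hba⟩ := hxy.symm.exists_snoc h.symm (by omega) a
      exact (ih (by omega) hba.symm).2 (hN b)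

variable (L n M) in
theorem exists_finite_substructure_colorCountEquiv [L.IsRelational] [Finite (L.Relations 1)] :
    ∃ S : L.Substructure M, Finite S ∧ ColorCountEquiv L n S M := by
  have (c : L.Relations 1 → Prop) : ∃ T ⊆ {x : M | color L x = c},
      T.encard = min {x : M | color L x = c}.encard n :=
    exists_subset_encard_eq (min_le_left _ _)
  choose T hTc hTn using this
  refine ⟨Substructure.closure L (⋃ c, T c), ?_, fun c => ?_⟩
  · have hT (c) : (T c).Finite := finite_of_encard_le_coe ((hTn c).trans_le (min_le_right _ _))
    rw [← SetLike.coe_sort_coe, Substructure.closure_eq_of_isRelational]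
    exact (finite_iUnion hT).to_subtype
  have hS : {x : Substructure.closure L (⋃ c, T c) | color L x = c} = Subtype.val ⁻¹' T c := by
    ext ⟨x, hx⟩
    simp only [Substructure.mem_closure_iff_of_isRelational, mem_iUnion] at hx
    obtain ⟨c', hxc'⟩ := hx
    refine ⟨?_, fun hxc => hTc c hxc⟩
    rintro (rfl : color L x = c)
    rwa [← show c' = color L x from (hTc c' hxc').symm]
  rw [hS, encard_preimage_of_injective_subset_range Subtype.val_injective, hTn, min_assoc,
    min_self]
  intro x hx
  exact ⟨⟨x, by simpa using mem_iUnion_of_mem c hx⟩, rfl⟩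

end Monadic

end FirstOrder.Language

theorem monadic_finite_model_property (L : FirstOrder.Language)
    (hFun : ∀ n, IsEmpty (L.Functions n))
    (hRel : ∀ n, n ≠ 1 → IsEmpty (L.Relations n))
    (hfin : Finite (L.Relations 1))
    (φ : L.Sentence)
    (hsat : ∃ (M : Type u) (S : L.Structure M), Nonempty M ∧ @Sentence.Realize L M S φ) :
    ∃ (M : Type u) (S : L.Structure M), Finite M ∧ Nonempty M ∧ @Sentence.Realize L M S φ := by
  have : L.IsRelational := hFun
  obtain ⟨M, S, hM, hφ⟩ := hsat
  obtain ⟨N, hNfin, hNM⟩ := exists_finite_substructure_colorCountEquiv L M (φ.quantifierDepth + 1)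
  refine ⟨N, inferInstance, hNfin, hNM.symm.nonempty (Nat.succ_pos _), ?_⟩
  exact (realize_iff_of_sameColorPattern hRel hNM φ (by omega) default default
    ⟨isEmptyElim, isEmptyElim⟩).2 hφ
end

section
/- Let L be a first-order language with no function symbols and no constant symbols (a relational language), let m and n be natural numbers, and let ψ be a quantifier-free L-formula with m + n free variables. If the prenex sentence ∃x₁ … ∃xₘ ∀y₁ … ∀yₙ ψ(x₁,…,xₘ,y₁,…,yₙ) has a model, then it has a model whose domain has cardinality at most max m 1. (Decidability via the finite model property for the Bernays–Schönfinkel class of ∃*∀* prenex sentences.) -/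
open FirstOrder Language

/-- Universally quantify the last `n` free variables of a bounded formula. -/
def univClosureLast {L : FirstOrder.Language} {m : ℕ} :
    ∀ {n : ℕ}, L.BoundedFormula Empty (m + n) → L.BoundedFormula Empty m
  | 0, ψ => ψ
  | _ + 1, ψ => univClosureLast ψ.all

/-- The Bernays–Schönfinkel prenex sentence `∃ x₁ … xₘ ∀ y₁ … yₙ, ψ`. -/
def bernaysSchoenfinkelSentence {L : FirstOrder.Language} {m n : ℕ}
    (ψ : L.BoundedFormula Empty (m + n)) : L.Sentence :=
  (univClosureLast ψ).exs

/-!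
An `∃*∀*` sentence is witnessed by a tuple `a` of at most `m` elements, and a universal formula
that holds in a structure holds in each of its substructures. In a relational language every
subset is a substructure, so the substructure on the entries of `a`, padded with an arbitrary
point to a nonempty tuple of length `max m 1`, is a model with at most `max m 1` elements.
-/

theorem Fin.exists_range_subset_range_of_le {α : Type*} [Nonempty α] {m k : ℕ} (hmk : m ≤ k)
    (a : Fin m → α) : ∃ g : Fin k → α, Set.range a ⊆ Set.range g :=
  ⟨Function.extend (Fin.castLE hmk) a fun _ => Classical.arbitrary α,
    Set.range_subset_iff.2 fun i => ⟨_, (Fin.castLE_injective hmk).extend_apply _ _ i⟩⟩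

namespace FirstOrder.Language

variable {L : Language} {M : Type*} [L.Structure M]

theorem BoundedFormula.IsUniversal.univClosureLast {m : ℕ} :
    ∀ {n : ℕ} {ψ : L.BoundedFormula Empty (m + n)}, ψ.IsUniversal →
      (_root_.univClosureLast ψ).IsUniversal
  | 0, _, h => h
  | n + 1, ψ, h => IsUniversal.univClosureLast (n := n) (ψ := ψ.all) h.all

theorem BoundedFormula.IsUniversal.realize_exs_substructure {m : ℕ}
    {φ : L.BoundedFormula Empty m} (hφ : φ.IsUniversal) (S : L.Substructure M)
    {a : Fin m → M} (haS : Set.range a ⊆ S) (ha : φ.Realize default a) :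
    S ⊨ φ.exs := by
  rw [Sentence.Realize, BoundedFormula.realize_exs]
  refine ⟨fun i => ⟨a i, haS (Set.mem_range_self i)⟩, hφ.realize_embedding S.subtype ?_⟩
  rwa [Subsingleton.elim (S.subtype ∘ default) default]

theorem Substructure.card_closure_range_le [L.IsRelational] {k : ℕ} (g : Fin k → M) :
    Nat.card (Substructure.closure L (Set.range g)) ≤ k :=
  calc Nat.card (Substructure.closure L (Set.range g)) = Nat.card (Set.range g) := by
        rw [← SetLike.coe_sort_coe, Substructure.closure_eq_of_isRelational]
    _ ≤ Nat.card (Fin k) := Finite.card_range_le g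
    _ = k := Nat.card_fin k

end FirstOrder.Language

theorem bernays_schoenfinkel_finite_model_property (L : FirstOrder.Language)
    (hFun : ∀ i, IsEmpty (L.Functions i)) (m n : ℕ)
    (ψ : L.BoundedFormula Empty (m + n)) (hqf : ψ.IsQF)
    (hsat : ∃ (M : Type u) (S : L.Structure M),
      Nonempty M ∧ @Sentence.Realize L M S (bernaysSchoenfinkelSentence ψ)) :
    ∃ (M : Type u) (S : L.Structure M),
      Nonempty M ∧ Finite M ∧ Nat.card M ≤ max m 1 ∧
        @Sentence.Realize L M S (bernaysSchoenfinkelSentence ψ) := by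
  have : L.IsRelational := hFun
  obtain ⟨M, _, _, hreal⟩ := hsat
  obtain ⟨a, ha⟩ := BoundedFormula.realize_exs.1 hreal
  obtain ⟨g, hag⟩ := Fin.exists_range_subset_range_of_le (le_max_left m 1) a
  let N := Substructure.closure L (Set.range g)
  refine ⟨N, inferInstance, ⟨g ⟨0, by omega⟩, Substructure.subset_closure (Set.mem_range_self _)⟩,
    (Substructure.fg_closure (Set.finite_range g)).finite, Substructure.card_closure_range_le g, ?_⟩
  exact hqf.isUniversal.univClosureLast.realize_exs_substructure N
    (hag.trans Substructure.subset_closure) ha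
end
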